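/- Consider the root system Φ of type E_7 with Weyl group W = W(E_7) containing W(A_7) ≅ S_8 via the sub-root system Φ' of type A_7 of the extended Dynkin diagram. The action of S_8 on Φ has exactly two orbits, of sizes 56 and 70; moreover the action of the alternating subgroup A_8 ⊂ S_8 also has exactly two orbits on Φ, again of sizes 56 and 70. -/

import Mathlib

/-!
The 56 roots of `Φ'` are the vectors `e_i - e_j`, indexed by ordered pairs `i ≠ j`, and the other
70 roots are the vectors `±1/2` indexed by the 4-subsets where the sign is `+`; precomposing with
`σ ∈ S_8` acts on these indices through `σ⁻¹`. Both index sets are single orbits of `A_8`, since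
`A_n` is `(n - 2)`-transitive on `n` points and hence transitive on ordered pairs and on
4-subsets of 8 points.
-/

/-- The 56 roots of the sub-root system `Φ' ⊆ Φ(E_7)` of type `A_7`, in the standard
model of `E_7` inside `{x ∈ ℝ^8 : Σ x = 0}`: the vectors `e_i - e_j`, `i ≠ j`. -/
def E7rootsA7 : Set (Fin 8 → ℝ) :=
  {v | ∃ i j : Fin 8, i ≠ j ∧ v = Pi.single i 1 - Pi.single j 1}

/-- The remaining 70 roots of `E_7`: the vectors all of whose coordinates are `±1/2`,
summing to `0` (four coordinates of each sign). -/
def E7rootsOther : Set (Fin 8 → ℝ) :=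
  {v | (∀ i, v i = 1 / 2 ∨ v i = -(1 / 2)) ∧ ∑ i, v i = 0}

open Equiv MulAction Finset
open scoped Pointwise

section

variable {ι : Type*} [DecidableEq ι]

noncomputable def singleSub (i j : ι) : ι → ℝ := Pi.single i 1 - Pi.single j 1

lemma singleSub_apply (i j k : ι) :
    singleSub i j k = (if k = i then 1 else 0) - (if k = j then 1 else 0) := by
  simp [singleSub, Pi.single_apply]

lemma singleSub_apply_eq_one_iff {i j k : ι} (h : i ≠ j) : singleSub i j k = 1 ↔ k = i := by
  rw [singleSub_apply]
  split_ifs <;> grind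

lemma singleSub_apply_eq_neg_one_iff {i j k : ι} (h : i ≠ j) :
    singleSub i j k = -1 ↔ k = j := by
  rw [singleSub_apply]
  split_ifs <;> grind

lemma singleSub_injOn : Set.InjOn (fun p : ι × ι => singleSub p.1 p.2) {p | p.1 ≠ p.2} := by
  rintro ⟨i, j⟩ (hij : i ≠ j) ⟨k, l⟩ (hkl : k ≠ l) (h : singleSub i j = singleSub k l)
  have hik : i = k := by
    rw [← singleSub_apply_eq_one_iff hkl, ← h, singleSub_apply_eq_one_iff hij]
  have hjl : j = l := by
    rw [← singleSub_apply_eq_neg_one_iff hkl, ← h, singleSub_apply_eq_neg_one_iff hij]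
  rw [hik, hjl]

lemma singleSub_comp_perm (σ : Perm ι) (i j : ι) : singleSub (σ i) (σ j) ∘ σ = singleSub i j := by
  ext k
  simp [singleSub_apply, σ.injective.eq_iff]

noncomputable def halfSignVector (s : Finset ι) : ι → ℝ :=
  fun k => if k ∈ s then 1 / 2 else -(1 / 2)

lemma halfSignVector_apply_eq_or (s : Finset ι) (k : ι) :
    halfSignVector s k = 1 / 2 ∨ halfSignVector s k = -(1 / 2) :=
  ite_eq_or_eq _ _ _

lemma halfSignVector_apply_eq_half_iff {s : Finset ι} {k : ι} :
    halfSignVector s k = 1 / 2 ↔ k ∈ s := by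
  unfold halfSignVector
  split_ifs <;> norm_num [*]

lemma halfSignVector_injective : Function.Injective (halfSignVector (ι := ι)) := by
  intro s t h
  ext k
  rw [← halfSignVector_apply_eq_half_iff, h, halfSignVector_apply_eq_half_iff]

lemma halfSignVector_comp_perm (σ : Perm ι) (s : Finset ι) :
    halfSignVector (σ • s) ∘ σ = halfSignVector s := by
  ext k
  simp [halfSignVector, ← Perm.smul_def, Finset.smul_mem_smul_finset_iff]

variable [Fintype ι]

lemma sum_halfSignVector (s : Finset ι) :
    ∑ k, halfSignVector s k = #s - Fintype.card ι / 2 := by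
  have hcompl : (#sᶜ : ℝ) = Fintype.card ι - #s := by
    rw [card_compl, Nat.cast_sub (card_le_univ s)]
  rw [← sum_add_sum_compl s]
  simp only [halfSignVector]
  rw [sum_ite_of_true (fun _ => id), sum_ite_of_false (fun _ => mem_compl.1), sum_const, sum_const,
    nsmul_eq_mul, nsmul_eq_mul, hcompl]
  ring

lemma eq_halfSignVector_filter {v : ι → ℝ} (hv : ∀ k, v k = 1 / 2 ∨ v k = -(1 / 2)) :
    v = halfSignVector {k | v k = 1 / 2} := by
  ext k
  rcases hv k with h | h <;> simp [halfSignVector, h]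

end

lemma alternatingGroup.isMultiplyPretransitive_two {α : Type*} [Fintype α] [DecidableEq α]
    (h : 4 ≤ Nat.card α) : IsMultiplyPretransitive (alternatingGroup α) α 2 :=
  have := alternatingGroup.isMultiplyPretransitive α
  isMultiplyPretransitive_of_le (n := Nat.card α - 2) (by omega) (by omega)

lemma E7rootsA7_eq_image :
    E7rootsA7 = (fun p : Fin 8 × Fin 8 => singleSub p.1 p.2) '' {p | p.1 ≠ p.2} := by
  ext v
  simp only [E7rootsA7, Set.mem_image, Set.mem_ofPred_eq, Prod.exists, singleSub, eq_comm (a := v)]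

lemma E7rootsOther_eq_image : E7rootsOther = halfSignVector '' Set.powersetCard (Fin 8) 4 := by
  ext v
  constructor
  · rintro ⟨hv, hsum⟩
    refine ⟨({k | v k = 1 / 2} : Finset (Fin 8)), ?_, (eq_halfSignVector_filter hv).symm⟩
    rw [eq_halfSignVector_filter hv, sum_halfSignVector, Fintype.card_fin] at hsum
    rw [Set.powersetCard.mem_iff]
    exact_mod_cast (by linarith : (#{k | v k = 1 / 2} : ℝ) = 4)
  · rintro ⟨s, hs, rfl⟩
    refine ⟨halfSignVector_apply_eq_or s, ?_⟩
    rw [sum_halfSignVector, Set.powersetCard.mem_iff.1 hs, Fintype.card_fin]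
    norm_num

lemma ncard_E7rootsA7 : E7rootsA7.ncard = 56 := by
  rw [E7rootsA7_eq_image, singleSub_injOn.ncard_image, Set.ncard_eq_toFinset_card']
  rfl

lemma ncard_E7rootsOther : E7rootsOther.ncard = 70 := by
  rw [E7rootsOther_eq_image, halfSignVector_injective.injOn.ncard_image, ← Nat.card_coe_set_eq,
    Set.powersetCard.card, Nat.card_fin]
  rfl

lemma disjoint_E7rootsA7_E7rootsOther : Disjoint E7rootsA7 E7rootsOther := by
  rw [Set.disjoint_left]
  rintro _ ⟨i, j, hij, rfl⟩ ⟨hv, -⟩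
  have : singleSub i j i = 1 := (singleSub_apply_eq_one_iff hij).2 rfl
  rcases hv i with h | h <;> rw [← singleSub, this] at h <;> norm_num at h

lemma comp_perm_mem_E7rootsA7 (σ : Perm (Fin 8)) {v : Fin 8 → ℝ} (hv : v ∈ E7rootsA7) :
    v ∘ σ ∈ E7rootsA7 := by
  obtain ⟨i, j, hij, rfl⟩ := hv
  refine ⟨σ⁻¹ i, σ⁻¹ j, by simpa using hij, ?_⟩
  simpa [singleSub] using singleSub_comp_perm σ (σ⁻¹ i) (σ⁻¹ j)

lemma comp_perm_mem_E7rootsOther (σ : Perm (Fin 8)) {v : Fin 8 → ℝ} (hv : v ∈ E7rootsOther) :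
    v ∘ σ ∈ E7rootsOther :=
  ⟨fun k => hv.1 (σ k), (Equiv.sum_comp σ v).trans hv.2⟩

lemma exists_mem_alternatingGroup_eq_comp_of_mem_E7rootsA7 {v w : Fin 8 → ℝ}
    (hv : v ∈ E7rootsA7) (hw : w ∈ E7rootsA7) : ∃ σ ∈ alternatingGroup (Fin 8), w = v ∘ σ := by
  obtain ⟨i, j, hij, rfl⟩ := hv
  obtain ⟨k, l, hkl, rfl⟩ := hw
  have := alternatingGroup.isMultiplyPretransitive_two (α := Fin 8) (by simp)
  obtain ⟨g, hk, hl⟩ := is_two_pretransitive_iff.1 this hkl hij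
  refine ⟨g, g.2, ?_⟩
  rw [← hk, ← hl]
  exact (singleSub_comp_perm g k l).symm

lemma exists_mem_alternatingGroup_eq_comp_of_mem_E7rootsOther {v w : Fin 8 → ℝ}
    (hv : v ∈ E7rootsOther) (hw : w ∈ E7rootsOther) :
    ∃ σ ∈ alternatingGroup (Fin 8), w = v ∘ σ := by
  rw [E7rootsOther_eq_image] at hv hw
  obtain ⟨s, hs, rfl⟩ := hv
  obtain ⟨t, ht, rfl⟩ := hw
  have := Set.powersetCard.isPretransitive_alternatingGroup (α := Fin 8) (n := 4) (by simp)
  obtain ⟨g, hg⟩ :=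
    exists_smul_eq (alternatingGroup (Fin 8)) (⟨t, ht⟩ : Set.powersetCard _ 4) ⟨s, hs⟩
  refine ⟨g, g.2, ?_⟩
  have : (g : Perm (Fin 8)) • t = s := congrArg Subtype.val hg
  rw [← this]
  exact (halfSignVector_comp_perm g t).symm

/-- The root system `Φ` of type `E_7` has 126 roots and decomposes, under the action of
`W(A_7) ≅ S_8` (acting through the sub-root system `Φ'` of type `A_7` of the extended
Dynkin diagram, i.e. by permuting the 8 coordinates), into exactly two orbits, of sizes
56 and 70; moreover each of the two sets is already a single orbit under the alternating
subgroup `A_8 ⊆ S_8`. -/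
theorem stmt_6 :
    E7rootsA7.ncard = 56 ∧ E7rootsOther.ncard = 70 ∧
    Disjoint E7rootsA7 E7rootsOther ∧
    (E7rootsA7 ∪ E7rootsOther).ncard = 126 ∧
    (∀ σ : Equiv.Perm (Fin 8), ∀ v ∈ E7rootsA7, v ∘ σ ∈ E7rootsA7) ∧
    (∀ σ : Equiv.Perm (Fin 8), ∀ v ∈ E7rootsOther, v ∘ σ ∈ E7rootsOther) ∧
    (∀ v ∈ E7rootsA7, ∀ w ∈ E7rootsA7,
      ∃ σ ∈ alternatingGroup (Fin 8), w = v ∘ σ) ∧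
    (∀ v ∈ E7rootsOther, ∀ w ∈ E7rootsOther,
      ∃ σ ∈ alternatingGroup (Fin 8), w = v ∘ σ) := by
  have finite_A7 : E7rootsA7.Finite := Set.finite_of_ncard_pos (by rw [ncard_E7rootsA7]; norm_num)
  have finite_Other : E7rootsOther.Finite :=
    Set.finite_of_ncard_pos (by rw [ncard_E7rootsOther]; norm_num)
  refine ⟨ncard_E7rootsA7, ncard_E7rootsOther, disjoint_E7rootsA7_E7rootsOther, ?_,
    fun σ _ => comp_perm_mem_E7rootsA7 σ, fun σ _ => comp_perm_mem_E7rootsOther σ,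
    fun _ hv _ => exists_mem_alternatingGroup_eq_comp_of_mem_E7rootsA7 hv,
    fun _ hv _ => exists_mem_alternatingGroup_eq_comp_of_mem_E7rootsOther hv⟩
  rw [Set.ncard_union_eq disjoint_E7rootsA7_E7rootsOther finite_A7 finite_Other, ncard_E7rootsA7,
    ncard_E7rootsOther]
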